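/- (Bergman) Let C be the subalgebra of F⟨x,y⟩ generated by the elements u_i + ū_i, where u_i ranges over all nonempty minimally balanced words over {x,y} and ū_i is the letter-swap of u_i. If f ∈ C and f = g·h is any factorization of f in F⟨x,y⟩, then both g and h lie in C. -/

import Mathlib

/-- The imbalance of a word over `{x,y}` (with `x = true`, `y = false`):
number of `x`'s minus number of `y`'s. -/
def imbL (m : List Bool) : ℤ := (m.count true : ℤ) - (m.count false : ℤ)

/-- A nonempty word over `{x,y}` is minimally balanced if its imbalance is `0`
and every nonempty proper prefix has strictly positive imbalance. -/
def MinBal (m : List Bool) : Prop :=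
  m ≠ [] ∧ imbL m = 0 ∧ ∀ p : List Bool, p <+: m → p ≠ [] → p ≠ m → 0 < imbL p
noncomputable section

/-- The degree of a noncommutative polynomial in the free algebra
`F⟨X⟩ = MonoidAlgebra F (FreeMonoid X)`. -/
def ncDeg {F : Type*} [Field F] {X : Type*} (f : MonoidAlgebra F (FreeMonoid X)) : ℕ :=
  f.coeff.support.sup fun m => m.length

/-- The algebra homomorphism `F⟨X⟩ → F⟨x,y⟩` determined by its values `v i`
on the variables, extended multiplicatively to monomials and linearly. -/
def phiGen {F : Type*} [Field F] {X : Type*}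
    (v : X → MonoidAlgebra F (FreeMonoid Bool)) :
    MonoidAlgebra F (FreeMonoid X) →ₐ[F] MonoidAlgebra F (FreeMonoid Bool) :=
  MonoidAlgebra.lift F _ (FreeMonoid X) (FreeMonoid.lift v)

/-- The subalgebra `C` of `F⟨x,y⟩` generated by the elements `u + ū`, where `u`
ranges over all nonempty minimally balanced words over `{x,y}` and `ū` is the
letter-swap of `u`. -/
def bergmanC (F : Type*) [Field F] : Subalgebra F (MonoidAlgebra F (FreeMonoid Bool)) :=
  Algebra.adjoin F {p | ∃ m : List Bool, MinBal m ∧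
    p = MonoidAlgebra.of F (FreeMonoid Bool) (FreeMonoid.ofList m) +
        MonoidAlgebra.of F (FreeMonoid Bool) (FreeMonoid.ofList (m.map not))}

/-!
The imbalance is a grading of `F⟨x,y⟩` in which `C` sits in degree `0`. Shortlex order embeds the
words into a linear order compatible with multiplication on both sides, so leading words of
a product are products of leading words; hence the factors of `f = g * h ∈ C` are homogeneous, of
degrees `d` and `-d`. The letter swap `σ` fixes `C`, so `g * h = σ g * σ h`; the shortlex-leading
words of `g` and `σ g` have the same length and are therefore the same prefix of the leading word
of `f`, which forces `d = -d`.

Balanced words form the free monoid on the balanced primes (nonempty balanced words without a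
nonempty balanced proper prefix): the minimally balanced words `u` and their swaps `ū`. On the
free algebra over the primes, the substitution `u ↦ u + c • ū`, `ū ↦ ū` has inverse `c ↦ -c`, and
`C` is the image for `c = 1` of the span of the words in the `u` alone. Pulling `g * h` back with
`c = -1` turns the problem into homogeneity for the grading by the number of letters `ū`: the
product has degree `0` and degrees are nonnegative, so both factors have degree `0`.
-/

section LeadingTerm

variable {M κ : Type*} [Mul M] [LinearOrder κ]

def IsMulRankOn (S : Set M) (r : M → κ) : Prop :=
  Set.InjOn r S ∧ ∀ ⦃u⦄, u ∈ S → ∀ ⦃v⦄, v ∈ S → ∀ ⦃w⦄, w ∈ S →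
    r u < r v → r (u * w) < r (v * w) ∧ r (w * u) < r (w * v)

variable {S : Set M} {r : M → κ}

theorem isMulRankOn_lex {Γ : Type*} [AddCommMonoid Γ] [LinearOrder Γ]
    [IsOrderedCancelAddMonoid Γ] {φ : M → Γ}
    (hφ : ∀ u ∈ S, ∀ v ∈ S, φ (u * v) = φ u + φ v)
    (hinj : ∀ u ∈ S, ∀ v ∈ S, φ u = φ v → r u = r v → u = v)
    (hmono : ∀ u ∈ S, ∀ v ∈ S, ∀ w ∈ S, φ u = φ v → r u < r v →
      r (u * w) < r (v * w) ∧ r (w * u) < r (w * v)) :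
    IsMulRankOn S fun w => toLex (φ w, r w) := by
  refine ⟨fun u hu v hv huv => ?_, fun u hu v hv w hw huv => ?_⟩
  · obtain ⟨h1, h2⟩ := Prod.ext_iff.1 (toLex.injective huv)
    exact hinj u hu v hv h1 h2
  · simp only [Prod.Lex.toLex_lt_toLex, hφ _ hu _ hw, hφ _ hv _ hw, hφ _ hw _ hu,
      hφ _ hw _ hv] at huv ⊢
    rcases huv with hlt | ⟨heq, hlt⟩
    · exact ⟨.inl (add_lt_add_left hlt _), .inl (add_lt_add_right hlt _)⟩
    · obtain ⟨h1, h2⟩ := hmono u hu v hv w hw heq hlt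
      exact ⟨.inr ⟨by rw [heq], h1⟩, .inr ⟨by rw [heq], h2⟩⟩

theorem IsMulRankOn.lex {Γ : Type*} [AddCommMonoid Γ] [LinearOrder Γ]
    [IsOrderedCancelAddMonoid Γ] (hr : IsMulRankOn S r) {φ : M → Γ}
    (hφ : ∀ u ∈ S, ∀ v ∈ S, φ (u * v) = φ u + φ v) :
    IsMulRankOn S fun w => toLex (φ w, r w) :=
  isMulRankOn_lex hφ (fun _ hu _ hv _ h => hr.1 hu hv h)
    (fun _ hu _ hv _ hw _ h => hr.2 hu hv hw h)

theorem IsMulRankOn.le_mul_of_isMaxOn (hr : IsMulRankOn S r) {A B : Set M} (hA : A ⊆ S)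
    (hB : B ⊆ S) {a b : M} (ha : a ∈ A) (hb : b ∈ B) (hamax : IsMaxOn r A a)
    (hbmax : IsMaxOn r B b) {u v : M} (hu : u ∈ A) (hv : v ∈ B) :
    r (u * v) ≤ r (a * b) := by
  have hub : r (u * v) ≤ r (u * b) := by
    rcases (hbmax hv).lt_or_eq with hlt | heq
    · exact (hr.2 (hB hv) (hB hb) (hA hu) hlt).2.le
    · rw [hr.1 (hB hv) (hB hb) heq]
  refine hub.trans ?_
  rcases (hamax hu).lt_or_eq with hlt | heq
  · exact (hr.2 (hA hu) (hA ha) (hB hb) hlt).1.le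
  · rw [hr.1 (hA hu) (hA ha) heq]

theorem IsMulRankOn.uniqueMul_of_isMaxOn (hr : IsMulRankOn S r) {A B : Finset M}
    (hA : ↑A ⊆ S) (hB : ↑B ⊆ S) {a b : M} (ha : a ∈ A) (hb : b ∈ B)
    (hamax : IsMaxOn r A a) (hbmax : IsMaxOn r B b) : UniqueMul A B a b := by
  intro u v hu hv huv
  have hu_eq : u = a := by
    by_contra hne
    have hlt := (hamax hu).lt_of_ne fun h => hne (hr.1 (hA hu) (hA ha) h)
    have := huv ▸ (hr.2 (hA hu) (hA ha) (hB hv) hlt).1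
    exact this.not_ge (hr.le_mul_of_isMaxOn hA hB ha hb hamax hbmax ha hv)
  subst hu_eq
  refine ⟨rfl, ?_⟩
  by_contra hne
  have hlt := (hbmax hv).lt_of_ne fun h => hne (hr.1 (hB hv) (hB hb) h)
  exact (huv ▸ (hr.2 (hB hv) (hB hb) (hA hu) hlt).2).false

theorem IsMulRankOn.exists_isMaxOn_mul_mem_support {R : Type*} [Semiring R]
    [NoZeroDivisors R] (hr : IsMulRankOn S r) {p q : MonoidAlgebra R M} (hp : p ≠ 0)
    (hq : q ≠ 0) (hpS : ↑p.coeff.support ⊆ S) (hqS : ↑q.coeff.support ⊆ S) :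
    ∃ a ∈ p.coeff.support, ∃ b ∈ q.coeff.support, IsMaxOn r p.coeff.support a ∧
      IsMaxOn r q.coeff.support b ∧ a * b ∈ (p * q).coeff.support ∧
      IsMaxOn r (p * q).coeff.support (a * b) := by
  classical
  obtain ⟨a, ha, hamax⟩ := p.coeff.support.exists_max_image r
    (Finsupp.support_nonempty_iff.2 (MonoidAlgebra.coeff_eq_zero.not.2 hp))
  obtain ⟨b, hb, hbmax⟩ := q.coeff.support.exists_max_image r
    (Finsupp.support_nonempty_iff.2 (MonoidAlgebra.coeff_eq_zero.not.2 hq))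
  replace hamax := isMaxOn_iff.2 hamax
  replace hbmax := isMaxOn_iff.2 hbmax
  refine ⟨a, ha, b, hb, hamax, hbmax, ?_, fun w hw => ?_⟩
  · rw [Finsupp.mem_support_iff, MonoidAlgebra.coeff_mul_mul_of_uniqueMul
      (hr.uniqueMul_of_isMaxOn hpS hqS ha hb hamax hbmax)]
    exact mul_ne_zero (Finsupp.mem_support_iff.1 ha) (Finsupp.mem_support_iff.1 hb)
  · obtain ⟨u, hu, v, hv, rfl⟩ :=
      Finset.mem_mul.1 (MonoidAlgebra.support_coeff_mul_subset p q hw)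
    exact hr.le_mul_of_isMaxOn hpS hqS ha hb hamax hbmax hu hv

theorem IsMulRankOn.exists_grade_eq_of_mul {R Γ : Type*} [Semiring R] [NoZeroDivisors R]
    [AddCommMonoid Γ] [LinearOrder Γ] [IsOrderedCancelAddMonoid Γ] (hr : IsMulRankOn S r)
    {φ : M → Γ} (hφ : ∀ u ∈ S, ∀ v ∈ S, φ (u * v) = φ u + φ v) {p q : MonoidAlgebra R M}
    (hp : p ≠ 0) (hq : q ≠ 0) (hpS : ↑p.coeff.support ⊆ S) (hqS : ↑q.coeff.support ⊆ S)
    {c : Γ} (hc : ∀ w ∈ (p * q).coeff.support, φ w = c) :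
    ∃ d e, d + e = c ∧ (∀ a ∈ p.coeff.support, φ a = d) ∧ ∀ b ∈ q.coeff.support, φ b = e := by
  have fst {Γ' : Type _} [LinearOrder Γ'] {ψ : M → Γ'} {s : Set M} {a : M}
      (h : IsMaxOn (fun w => toLex (ψ w, r w)) s a) {x : M} (hx : x ∈ s) : ψ x ≤ ψ a :=
    Prod.Lex.monotone_fst _ _ (h hx)
  obtain ⟨a₁, ha₁, b₁, hb₁, hamax, hbmax, hab₁, -⟩ :=
    (hr.lex hφ).exists_isMaxOn_mul_mem_support hp hq hpS hqS
  obtain ⟨a₂, ha₂, b₂, hb₂, hamin, hbmin, hab₂, -⟩ :=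
    (hr.lex (φ := OrderDual.toDual ∘ φ) hφ).exists_isMaxOn_mul_mem_support hp hq hpS hqS
  have hsum₁ := (hφ _ (hpS ha₁) _ (hqS hb₁)).symm.trans (hc _ hab₁)
  have hsum₂ := (hφ _ (hpS ha₂) _ (hqS hb₂)).symm.trans (hc _ hab₂)
  have hmin_a : ∀ a ∈ p.coeff.support, φ a₂ ≤ φ a := fun _ h => fst hamin h
  have hmin_b : ∀ b ∈ q.coeff.support, φ b₂ ≤ φ b := fun _ h => fst hbmin h
  have ha : φ a₂ = φ a₁ := by
    refine (hmin_a _ ha₁).antisymm (not_lt.1 fun hlt => ?_)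
    exact (add_lt_add_of_lt_of_le hlt (hmin_b _ hb₁)).ne (hsum₂.trans hsum₁.symm)
  have hb : φ b₂ = φ b₁ := add_left_cancel (ha ▸ hsum₂.trans hsum₁.symm)
  exact ⟨φ a₁, φ b₁, hsum₁, fun a h => (fst hamax h).antisymm (ha ▸ hmin_a a h),
    fun b h => (fst hbmax h).antisymm (hb ▸ hmin_b b h)⟩

theorem IsMulRankOn.comp {N G : Type*} [Mul N] [FunLike G N M] [MulHomClass G N M]
    (hr : IsMulRankOn S r) {f : G} (hf : Function.Injective f) :
    IsMulRankOn (f ⁻¹' S) (r ∘ f) :=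
  ⟨fun _ hu _ hv h => hf (hr.1 hu hv h), fun u hu v hv w hw h => by
    simpa only [Function.comp_apply, map_mul] using hr.2 hu hv hw h⟩

end LeadingTerm

open scoped MonoidAlgebra

section Supported

variable (R : Type*) {M : Type*} [CommSemiring R] [Monoid M]

def supportedSubalgebra (S : Submonoid M) : Subalgebra R R[M] where
  carrier := {x | ↑x.coeff.support ⊆ (S : Set M)}
  mul_mem' {x y} hx hy w hw := by
    classical
    obtain ⟨u, hu, v, hv, rfl⟩ :=
      Finset.mem_mul.1 (MonoidAlgebra.support_coeff_mul_subset x y hw)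
    exact S.mul_mem (hx hu) (hy hv)
  add_mem' {x y} hx hy w hw := by
    classical
    rcases Finset.mem_union.1 (Finsupp.support_add hw) with h | h
    exacts [hx h, hy h]
  algebraMap_mem' r w hw := by
    rw [MonoidAlgebra.coe_algebraMap, Function.comp_apply, MonoidAlgebra.coeff_single] at hw
    rw [Finset.mem_singleton.1 (Finsupp.support_single_subset hw)]
    exact S.one_mem

variable {R} {S : Submonoid M}

theorem single_mem_supportedSubalgebra {m : M} (hm : m ∈ S) (r : R) :
    MonoidAlgebra.single m r ∈ supportedSubalgebra R S := by
  intro w hw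
  rw [MonoidAlgebra.coeff_single] at hw
  rwa [Finset.mem_singleton.1 (Finsupp.support_single_subset hw)]

end Supported

theorem FreeMonoid.map_injective {α β : Type*} {f : α → β} (hf : Function.Injective f) :
    Function.Injective (FreeMonoid.map f) := fun u v h =>
  FreeMonoid.toList.injective (List.map_injective_iff.2 hf
    (by simpa only [FreeMonoid.toList_map] using congrArg FreeMonoid.toList h))

def binaryValue (w : FreeMonoid Bool) : ℕ := Nat.ofDigits 2 (w.toList.map Bool.toNat)

theorem binaryValue_mul (u v : FreeMonoid Bool) :
    binaryValue (u * v) = binaryValue u + 2 ^ u.length * binaryValue v := by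
  simp only [binaryValue, FreeMonoid.toList_mul, List.map_append, Nat.ofDigits_append,
    List.length_map, FreeMonoid.length]

theorem isMulRankOn_shortlex :
    IsMulRankOn Set.univ fun w : FreeMonoid Bool => toLex (w.length, binaryValue w) := by
  refine isMulRankOn_lex (fun u _ v _ => FreeMonoid.length_mul u v)
    (fun u _ v _ hlen hval => ?_) (fun u _ v _ w _ hlen hlt => ?_)
  · have hdigit {w : FreeMonoid Bool} : ∀ d ∈ w.toList.map Bool.toNat, d < 2 := by
      simp only [List.mem_map]
      rintro _ ⟨b, -, rfl⟩
      exact b.toNat_lt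
    have hlen' : (u.toList.map Bool.toNat).length = (v.toList.map Bool.toNat).length := by
      rw [List.length_map, List.length_map]
      exact hlen
    exact FreeMonoid.toList.injective (List.map_injective_iff.2 (by decide)
      (Nat.ofDigits_inj_of_len_eq one_lt_two hlen' hdigit hdigit hval))
  · simp only [binaryValue_mul, hlen]
    constructor
    · omega
    · exact Nat.add_lt_add_left (Nat.mul_lt_mul_of_pos_left hlt (by positivity)) _

section BalancedWords

theorem imbL_append (u v : List Bool) : imbL (u ++ v) = imbL u + imbL v := by
  simp only [imbL, List.count_append]
  push_cast
  ring

theorem imbL_singleton (b : Bool) : imbL [b] = if b then 1 else -1 := by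
  cases b <;> rfl

theorem map_not_map_not (w : List Bool) : (w.map not).map not = w := by
  simp [Function.comp_def]

theorem imbL_map_not (w : List Bool) : imbL (w.map not) = -imbL w := by
  induction w with
  | nil => rfl
  | cons b w ih =>
    rw [List.map_cons, ← List.singleton_append, imbL_append, ih, ← List.singleton_append (l := w),
      imbL_append, imbL_singleton, imbL_singleton]
    cases b <;> norm_num <;> ring

def IsBalancedPrime (p : List Bool) : Prop :=
  p ≠ [] ∧ imbL p = 0 ∧ ∀ q, q <+: p → q ≠ [] → q ≠ p → imbL q ≠ 0

theorem MinBal.isBalancedPrime {m : List Bool} (hm : MinBal m) : IsBalancedPrime m :=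
  ⟨hm.1, hm.2.1, fun q hq hne hne' => (hm.2.2 q hq hne hne').ne'⟩

theorem MinBal.head? {m : List Bool} (hm : MinBal m) : m.head? = some true := by
  obtain ⟨hne, hbal, hpos⟩ := hm
  obtain ⟨b, t, rfl⟩ := List.exists_cons_of_ne_nil hne
  have ht : t ≠ [] := by rintro rfl; cases b <;> simp [imbL] at hbal
  have := hpos [b] (List.prefix_append [b] t) (List.cons_ne_nil _ _) (by simpa using ht.symm)
  cases b <;> simp_all [imbL]

theorem IsBalancedPrime.minBal {p : List Bool} (hp : IsBalancedPrime p)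
    (hx : p.head? = some true) : MinBal p := by
  refine ⟨hp.1, hp.2.1, fun q => ?_⟩
  induction q using List.reverseRecOn with
  | nil => exact fun _ h => absurd rfl h
  | append_singleton q b ih =>
    intro hq _ hne
    rcases eq_or_ne q [] with rfl | hq0
    · obtain ⟨t, rfl⟩ := hq
      simp_all [imbL]
    have hq' : q <+: p := (List.prefix_append q [b]).trans hq
    have hlt : q.length < p.length := by
      have := hq.length_le
      simp only [List.length_append, List.length_singleton] at this
      omega
    have := ih hq' hq0 (by rintro rfl; omega)
    have := hp.2.2 _ hq (by simp) hne
    rw [imbL_append, imbL_singleton] at this ⊢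
    split_ifs at this ⊢ <;> omega

theorem IsBalancedPrime.map_not {p : List Bool} (hp : IsBalancedPrime p) :
    IsBalancedPrime (p.map not) := by
  refine ⟨by simpa using hp.1, by rw [imbL_map_not, hp.2.1, neg_zero], fun q hq hne hne' => ?_⟩
  have := hp.2.2 (q.map not) (by simpa only [map_not_map_not] using hq.map not)
    (by simpa using hne) (by rintro rfl; exact hne' (map_not_map_not q).symm)
  rwa [imbL_map_not, neg_ne_zero] at this

theorem IsBalancedPrime.eq_of_append_eq_append {p q s t : List Bool} (hp : IsBalancedPrime p)
    (hq : IsBalancedPrime q) (h : p ++ s = q ++ t) : p = q := by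
  have hp' : p <+: q ++ t := h ▸ List.prefix_append p s
  rcases List.prefix_or_prefix_of_prefix hp' (List.prefix_append q t) with hpq | hqp
  · by_contra hne; exact hq.2.2 p hpq hp.1 hne hp.2.1
  · by_contra hne; exact hp.2.2 q hqp hq.1 (Ne.symm hne) hq.2.1

abbrev BalancedPrime : Type := {p : List Bool // IsBalancedPrime p}

def BalancedPrime.swap (p : BalancedPrime) : BalancedPrime := ⟨p.1.map not, p.2.map_not⟩

theorem exists_flatten_balancedPrime (w : List Bool) (hw : imbL w = 0) :
    ∃ l : List BalancedPrime, (l.map Subtype.val).flatten = w := by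
  classical
  rcases eq_or_ne w [] with rfl | hne
  · exact ⟨[], rfl⟩
  have hex : ∃ k, 0 < k ∧ imbL (w.take k) = 0 :=
    ⟨w.length, List.length_pos_iff.2 hne, by rwa [List.take_length]⟩
  obtain ⟨hk, hbal⟩ := Nat.find_spec hex
  have hprime : IsBalancedPrime (w.take (Nat.find hex)) := by
    refine ⟨by simp [hne, hk.ne'], hbal, fun q hq hq0 hqne hqbal => ?_⟩
    have hlt : q.length < Nat.find hex := by
      have := hq.length_le
      have := mt hq.eq_of_length hqne
      simp only [List.length_take] at *
      omega
    refine Nat.find_min hex hlt ⟨List.length_pos_iff.2 hq0, ?_⟩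
    rwa [List.prefix_iff_eq_take.1 (hq.trans (List.take_prefix _ w))] at hqbal
  have hrest : imbL (w.drop (Nat.find hex)) = 0 := by
    have := imbL_append (w.take (Nat.find hex)) (w.drop (Nat.find hex))
    rw [List.take_append_drop, hw, hbal] at this
    omega
  obtain ⟨l, hl⟩ := exists_flatten_balancedPrime _ hrest
  exact ⟨⟨_, hprime⟩ :: l, by rw [List.map_cons, List.flatten_cons, hl, List.take_append_drop]⟩
termination_by w.length
decreasing_by
  simp only [List.length_drop]
  have := List.length_pos_iff.2 hne
  omega

theorem flatten_map_val_injective :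
    Function.Injective fun l : List BalancedPrime => (l.map Subtype.val).flatten := by
  intro l l' h
  induction l generalizing l' with
  | nil =>
    cases l' with
    | nil => rfl
    | cons p' l' => exact absurd h.symm (by simp [p'.2.1])
  | cons p l ih =>
    cases l' with
    | nil => exact absurd h (by simp [p.2.1])
    | cons p' l' =>
      simp only [List.map_cons, List.flatten_cons] at h
      have hpp' := Subtype.ext (p.2.eq_of_append_eq_append p'.2 h)
      subst hpp'
      rw [ih (List.append_cancel_left h)]

end BalancedWords

section LetterSwap

def balancedWords : Submonoid (FreeMonoid Bool) where
  carrier := {w | imbL w.toList = 0}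
  mul_mem' {u v} hu hv := by
    simp only [Set.mem_ofPred_eq, FreeMonoid.toList_mul, imbL_append] at *
    rw [hu, hv, add_zero]
  one_mem' := rfl

theorem bergmanC_le_supportedSubalgebra_balancedWords (F : Type*) [Field F] :
    bergmanC F ≤ supportedSubalgebra F balancedWords := by
  refine Algebra.adjoin_le ?_
  rintro _ ⟨m, hm, rfl⟩
  refine add_mem (single_mem_supportedSubalgebra ?_ _) (single_mem_supportedSubalgebra ?_ _)
  · exact hm.2.1
  · change imbL (m.map not) = 0
    rw [imbL_map_not, hm.2.1, neg_zero]

variable (R : Type*) [CommSemiring R]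

def swapLetters : R[FreeMonoid Bool] →ₐ[R] R[FreeMonoid Bool] :=
  MonoidAlgebra.mapDomainAlgHom R R (FreeMonoid.map not)

theorem swapLetters_of_ofList (l : List Bool) :
    swapLetters R (MonoidAlgebra.of R _ (FreeMonoid.ofList l)) =
      MonoidAlgebra.of R _ (FreeMonoid.ofList (l.map not)) := by
  simp [swapLetters]
  rfl

theorem support_swapLetters (x : R[FreeMonoid Bool]) :
    ↑(swapLetters R x).coeff.support = FreeMonoid.map not '' ↑x.coeff.support := by
  classical
  rw [swapLetters, MonoidAlgebra.mapDomainAlgHom_apply, MonoidAlgebra.coeff_mapDomain,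
    Finsupp.mapDomain_support_of_injective (FreeMonoid.map_injective Bool.not_injective),
    Finset.coe_image]

theorem bergmanC_le_equalizer_swapLetters (F : Type*) [Field F] :
    bergmanC F ≤ AlgHom.equalizer (swapLetters F) (AlgHom.id F _) := by
  refine Algebra.adjoin_le ?_
  rintro _ ⟨m, -, rfl⟩
  change swapLetters F _ = _
  rw [map_add, swapLetters_of_ofList, swapLetters_of_ofList, map_not_map_not, AlgHom.id_apply,
    add_comm]

theorem eq_zero_of_swapLetters_mul_swapLetters {R : Type*} [CommSemiring R] [NoZeroDivisors R]
    {g h : R[FreeMonoid Bool]} {d : ℤ} (hg0 : g ≠ 0) (hh0 : h ≠ 0)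
    (hg : ∀ a ∈ g.coeff.support, imbL a.toList = d)
    (hswap : swapLetters R g * swapLetters R h = g * h) : d = 0 := by
  have hr := isMulRankOn_shortlex
  obtain ⟨a, ha, b, -, hamax, -, hab, habmax⟩ :=
    hr.exists_isMaxOn_mul_mem_support hg0 hh0 (Set.subset_univ _) (Set.subset_univ _)
  obtain ⟨a', ha', b', -, ha'max, -, ha'b', ha'b'max⟩ := hr.exists_isMaxOn_mul_mem_support
    (left_ne_zero_of_mul (hswap ▸ mul_ne_zero hg0 hh0))
    (right_ne_zero_of_mul (hswap ▸ mul_ne_zero hg0 hh0)) (Set.subset_univ _) (Set.subset_univ _)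
  rw [hswap] at ha'b' ha'b'max
  have heq : a * b = a' * b' :=
    hr.1 (Set.mem_univ _) (Set.mem_univ _) ((ha'b'max hab).antisymm (habmax ha'b'))
  have hsupp := support_swapLetters R g
  obtain ⟨a₀, ha₀, rfl⟩ : a' ∈ FreeMonoid.map not '' ↑g.coeff.support := hsupp ▸ ha'
  have hlen : a.length = (FreeMonoid.map not a₀).length := by
    have h₁ : a₀.length ≤ a.length := Prod.Lex.monotone_fst _ _ (hamax ha₀)
    have hmem : FreeMonoid.map not a ∈ ((swapLetters R g).coeff.support : Set _) :=
      hsupp ▸ Set.mem_image_of_mem _ ha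
    have h₂ := Prod.Lex.monotone_fst _ _ (ha'max hmem)
    simp only [ofLex_toLex, FreeMonoid.length, FreeMonoid.toList_map, List.length_map] at h₁ h₂ ⊢
    omega
  have haa : a = FreeMonoid.map not a₀ := FreeMonoid.toList.injective
    (List.append_inj (by simpa only [FreeMonoid.toList_mul] using congrArg FreeMonoid.toList heq)
      hlen).1
  have := hg a ha
  rw [haa, FreeMonoid.toList_map, imbL_map_not, hg a₀ ha₀] at this
  omega

end LetterSwap

section PrimeSubstitution

variable (R : Type*) [CommSemiring R]

def flattenHom : FreeMonoid BalancedPrime →* FreeMonoid Bool :=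
  FreeMonoid.lift fun p => FreeMonoid.ofList p.1

theorem toList_flattenHom (w : FreeMonoid BalancedPrime) :
    (flattenHom w).toList = (w.toList.map Subtype.val).flatten := by
  simp [flattenHom, FreeMonoid.lift_apply, FreeMonoid.toList_prod, Function.comp_def]

theorem flattenHom_injective : Function.Injective flattenHom := fun u v h =>
  FreeMonoid.toList.injective <| flatten_map_val_injective <| by
    simpa only [toList_flattenHom] using congrArg FreeMonoid.toList h

theorem exists_flattenHom_eq {w : FreeMonoid Bool} (hw : w ∈ balancedWords) :
    ∃ v, flattenHom v = w := by
  obtain ⟨l, hl⟩ := exists_flatten_balancedPrime _ hw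
  exact ⟨FreeMonoid.ofList l, FreeMonoid.toList.injective (by rw [toList_flattenHom]; exact hl)⟩

def flattenAlg : R[FreeMonoid BalancedPrime] →ₐ[R] R[FreeMonoid Bool] :=
  MonoidAlgebra.mapDomainAlgHom R R flattenHom

theorem flattenAlg_injective : Function.Injective (flattenAlg R) :=
  MonoidAlgebra.mapDomain_injective flattenHom_injective

theorem flattenAlg_of (w : FreeMonoid BalancedPrime) :
    flattenAlg R (MonoidAlgebra.of R _ w) = MonoidAlgebra.of R _ (flattenHom w) := by
  simp [flattenAlg]

theorem exists_flattenAlg_eq {g : R[FreeMonoid Bool]}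
    (hg : g ∈ supportedSubalgebra R balancedWords) : ∃ g', flattenAlg R g' = g := by
  have : MonoidAlgebra.supported R R (balancedWords : Set (FreeMonoid Bool)) ≤
      LinearMap.range (flattenAlg R).toLinearMap := by
    rw [MonoidAlgebra.supported_eq_span_single, Submodule.span_le]
    rintro _ ⟨w, hw, rfl⟩
    obtain ⟨v, rfl⟩ := exists_flattenHom_eq hw
    exact ⟨MonoidAlgebra.single v 1, by simp [flattenAlg]⟩
  exact this hg

def twistSubst (c : R) : R[FreeMonoid BalancedPrime] →ₐ[R] R[FreeMonoid BalancedPrime] :=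
  MonoidAlgebra.lift R _ _ <| FreeMonoid.lift fun p =>
    if p.1.head? = some true then
      MonoidAlgebra.of R _ (.of p) + c • MonoidAlgebra.of R _ (.of p.swap)
    else MonoidAlgebra.of R _ (.of p)

theorem twistSubst_of (c : R) (p : BalancedPrime) :
    twistSubst R c (MonoidAlgebra.of R _ (.of p)) =
      if p.1.head? = some true then
        MonoidAlgebra.of R _ (.of p) + c • MonoidAlgebra.of R _ (.of p.swap)
      else MonoidAlgebra.of R _ (.of p) := by
  rw [twistSubst, MonoidAlgebra.lift_of, FreeMonoid.lift_eval_of]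

theorem BalancedPrime.head?_swap (p : BalancedPrime) : p.swap.1.head? = p.1.head?.map not :=
  List.head?_map

theorem twistSubst_comp (c d : R) :
    (twistSubst R c).comp (twistSubst R d) = twistSubst R (c + d) := by
  refine MonoidAlgebra.algHom_ext' (FreeMonoid.hom_eq fun p => ?_) (Subsingleton.elim _ _)
  simp only [MonoidHom.comp_apply, AlgHom.coe_toMonoidHom, AlgHom.comp_apply, twistSubst_of]
  split_ifs with hp
  · rw [map_add, map_smul, twistSubst_of, twistSubst_of, if_pos hp,
      if_neg (by simp [p.head?_swap, hp]), add_assoc, ← add_smul]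
  · rw [twistSubst_of, if_neg hp]

theorem twistSubst_zero : twistSubst R (0 : R) = AlgHom.id R _ := by
  refine MonoidAlgebra.algHom_ext' (FreeMonoid.hom_eq fun p => ?_) (Subsingleton.elim _ _)
  simp only [MonoidHom.comp_apply, AlgHom.coe_toMonoidHom, twistSubst_of, zero_smul, add_zero,
    ite_self, AlgHom.id_apply]

theorem flattenAlg_twistSubst_of (c : R) {p : BalancedPrime}
    (hp : p.1.head? = some true) :
    flattenAlg R (twistSubst R c (MonoidAlgebra.of R _ (.of p))) =
      MonoidAlgebra.of R _ (FreeMonoid.ofList p.1) +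
        c • MonoidAlgebra.of R _ (FreeMonoid.ofList (p.1.map not)) := by
  rw [twistSubst_of, if_pos hp, map_add, map_smul, flattenAlg_of, flattenAlg_of]
  rfl

end PrimeSubstitution

section TwistInverse

variable (R : Type*) [CommRing R]

theorem twistSubst_neg_twistSubst (c : R) (x : R[FreeMonoid BalancedPrime]) :
    twistSubst R (-c) (twistSubst R c x) = x := by
  rw [← AlgHom.comp_apply, twistSubst_comp, neg_add_cancel, twistSubst_zero, AlgHom.id_apply]

theorem twistSubst_twistSubst_neg (c : R) (x : R[FreeMonoid BalancedPrime]) :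
    twistSubst R c (twistSubst R (-c) x) = x := by
  rw [← AlgHom.comp_apply, twistSubst_comp, add_neg_cancel, twistSubst_zero, AlgHom.id_apply]

end TwistInverse

section PositiveWords

def negCount (w : FreeMonoid BalancedPrime) : ℕ :=
  w.toList.countP fun p => p.1.head? ≠ some true

theorem negCount_mul (u v : FreeMonoid BalancedPrime) :
    negCount (u * v) = negCount u + negCount v := by
  simp only [negCount, FreeMonoid.toList_mul, List.countP_append]

theorem negCount_of (p : BalancedPrime) : negCount (.of p) = 0 ↔ p.1.head? = some true := by
  simp [negCount]

def positiveWords : Submonoid (FreeMonoid BalancedPrime) where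
  carrier := {w | negCount w = 0}
  mul_mem' {u v} hu hv := by
    simp only [Set.mem_ofPred_eq, negCount_mul] at *
    rw [hu, hv]
  one_mem' := rfl

variable (F : Type*) [Field F]

theorem bergmanC_le_map_supportedSubalgebra_positiveWords :
    bergmanC F ≤ (supportedSubalgebra F positiveWords).map
      ((flattenAlg F).comp (twistSubst F 1)) := by
  refine Algebra.adjoin_le ?_
  rintro _ ⟨m, hm, rfl⟩
  refine ⟨MonoidAlgebra.of F _ (.of ⟨m, hm.isBalancedPrime⟩), ?_, ?_⟩
  · exact single_mem_supportedSubalgebra ((negCount_of _).2 hm.head?) 1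
  · change flattenAlg F (twistSubst F 1 _) = _
    rw [flattenAlg_twistSubst_of F 1 hm.head?, one_smul]

theorem map_supportedSubalgebra_positiveWords_le_bergmanC :
    (supportedSubalgebra F positiveWords).map ((flattenAlg F).comp (twistSubst F 1)) ≤
      bergmanC F := by
  rw [Subalgebra.map_le]
  intro x hx
  refine Algebra.adjoin_le ?_ (MonoidAlgebra.mem_adjoin_support x)
  rintro _ ⟨w, hw, rfl⟩
  replace hw : negCount w = 0 := hx hw
  induction w with
  | one =>
    rw [map_one]
    exact one_mem _
  | of p =>
    refine Algebra.subset_adjoin ⟨p.1, ⟨p.2.minBal ((negCount_of p).1 hw), ?_⟩⟩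
    change flattenAlg F (twistSubst F 1 _) = _
    rw [flattenAlg_twistSubst_of F 1 ((negCount_of p).1 hw), one_smul]
  | mul u v hu hv =>
    rw [negCount_mul, Nat.add_eq_zero_iff] at hw
    rw [map_mul]
    exact mul_mem (hu hw.1) (hv hw.2)

end PositiveWords

theorem mem_bergmanC_of_mul_mem {F : Type*} [Field F] {g h : F[FreeMonoid Bool]}
    (hg : g ∈ supportedSubalgebra F balancedWords) (hh : h ∈ supportedSubalgebra F balancedWords)
    (hg0 : g ≠ 0) (hh0 : h ≠ 0) (hgh : g * h ∈ bergmanC F) :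
    g ∈ bergmanC F ∧ h ∈ bergmanC F := by
  obtain ⟨g', rfl⟩ := exists_flattenAlg_eq F hg
  obtain ⟨h', rfl⟩ := exists_flattenAlg_eq F hh
  obtain ⟨y, hy, hyg'h'⟩ :=
    Subalgebra.mem_map.1 (bergmanC_le_map_supportedSubalgebra_positiveWords F hgh)
  have hy' : y = twistSubst F (-1) g' * twistSubst F (-1) h' := by
    have : twistSubst F 1 y = g' * h' := flattenAlg_injective F (by rw [map_mul]; exact hyg'h')
    rw [← map_mul, ← this, twistSubst_neg_twistSubst]
  have hne {x} (hx : flattenAlg F x ≠ 0) : twistSubst F (-1) x ≠ 0 := fun h0 =>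
    hx (by rw [← twistSubst_twistSubst_neg F 1 x, h0, map_zero, map_zero])
  obtain ⟨d, e, hde, hd, he⟩ :=
    (isMulRankOn_shortlex.comp flattenHom_injective).exists_grade_eq_of_mul
      (fun u _ v _ => negCount_mul u v) (hne hg0) (hne hh0) (fun _ _ => Set.mem_univ _)
      (fun _ _ => Set.mem_univ _) (c := 0) fun w hw => (hy' ▸ hy) hw
  have hmem {x} (hx : ∀ w ∈ (twistSubst F (-1) x).coeff.support, negCount w = 0) :
      flattenAlg F x ∈ bergmanC F := by
    refine map_supportedSubalgebra_positiveWords_le_bergmanC F ⟨_, hx, ?_⟩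
    change flattenAlg F (twistSubst F 1 _) = _
    rw [twistSubst_twistSubst_neg]
  exact ⟨hmem fun w hw => (hd w hw).trans (by omega), hmem fun w hw => (he w hw).trans (by omega)⟩

/-- (Bergman) If `f ∈ C` and `f = g·h` is any factorization of `f` in `F⟨x,y⟩`,
then both factors `g` and `h` lie in `C`. -/
theorem bergman_factors_in_C (F : Type*) [Field F]
    (f g h : MonoidAlgebra F (FreeMonoid Bool))
    (hf : f ∈ bergmanC F) (hfgh : f = g * h) (hf0 : f ≠ 0) :
    g ∈ bergmanC F ∧ h ∈ bergmanC F := by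
  subst hfgh
  have hg0 := left_ne_zero_of_mul hf0
  have hh0 := right_ne_zero_of_mul hf0
  have hbal := bergmanC_le_supportedSubalgebra_balancedWords F hf
  obtain ⟨d, e, hde, hd, he⟩ := isMulRankOn_shortlex.exists_grade_eq_of_mul
    (φ := fun w => imbL w.toList) (fun u _ v _ => by rw [FreeMonoid.toList_mul, imbL_append])
    hg0 hh0 (Set.subset_univ _) (Set.subset_univ _) (c := 0) fun w hw => hbal hw
  have hd0 : d = 0 := eq_zero_of_swapLetters_mul_swapLetters hg0 hh0 hd
    (by rw [← map_mul]; exact bergmanC_le_equalizer_swapLetters F hf)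
  subst hd0
  exact mem_bergmanC_of_mul_mem (fun w hw => hd w hw)
    (fun w hw => (he w hw).trans (by simpa using hde)) hg0 hh0 hf
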